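/- Let N ≥ 1, σ ∈ (1,2), β ∈ (σ-1, 1), Γ > 0, and set α = 1 + β - σ ∈ (0,1). Let α' ∈ (0, α). Let K : ℝ^N \ {0} → [0,∞) be measurable and even (K(-z) = K(z)) with K(z) ≤ Γ|z|^{-(N+σ)}. Let φ : ℝ^N → ℝ be bounded with |φ| ≤ M₀ and differentiable with ∇φ β-Hölder with constant M₁. Then there exists a constant C, depending only on N, σ, β, α' and Γ, such that for all x₁, x₂ ∈ ℝ^N, |Lφ(x₁) - Lφ(x₂)| ≤ C ‖x₁ - x₂‖^{α'} (M₀ + M₁), where Lφ(x) = ½ ∫_{ℝ^N} (φ(x+z) + φ(x-z) - 2φ(x)) K(z) dz. -/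

import Mathlib

open MeasureTheory Metric Set Filter

open Real ENNReal

section AuxStmt13

variable {N : ℕ}

local notation "E" => EuclideanSpace ℝ (Fin N)

lemma myNontrivial (hN : 1 ≤ N) : Nontrivial (EuclideanSpace ℝ (Fin N)) := by
  refine ⟨⟨EuclideanSpace.single (⟨0, hN⟩ : Fin N) (1:ℝ), 0, fun h => ?_⟩⟩
  have := congrArg (fun v : EuclideanSpace ℝ (Fin N) => v (⟨0, hN⟩ : Fin N)) h
  simp [EuclideanSpace.single_apply] at this

lemma lint_annuli (hN : 1 ≤ N) {ℓ u : ℕ → ℝ} (hl : ∀ k, 0 < ℓ k) (hu : ∀ k, 0 ≤ u k)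
    {S : Set (EuclideanSpace ℝ (Fin N))}
    (hS : ∀ z : EuclideanSpace ℝ (Fin N), z ∈ S → z ≠ 0 → ∃ k, ℓ k ≤ ‖z‖ ∧ ‖z‖ < u k)
    {p : ℝ} (hp : p ≤ 0) :
    ∫⁻ z in S, ENNReal.ofReal (‖z‖ ^ p) ≤
      (∑' k, ENNReal.ofReal ((ℓ k) ^ p * (u k) ^ (N:ℝ))) *
        volume (ball (0:EuclideanSpace ℝ (Fin N)) 1) := by
  haveI := myNontrivial hN
  have hsub : S ⊆ {0} ∪ ⋃ k, (ball (0:E) (u k) \ ball 0 (ℓ k)) := by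
    intro z hz
    by_cases h0 : z = 0
    · exact Or.inl (by simp [h0])
    · obtain ⟨k, hk1, hk2⟩ := hS z hz h0
      exact Or.inr (mem_iUnion.2 ⟨k, by simp [mem_ball_zero_iff, hk2, not_lt.2 hk1]⟩)
  calc ∫⁻ z in S, ENNReal.ofReal (‖z‖ ^ p)
      ≤ ∫⁻ z in ({0} ∪ ⋃ k, (ball (0:E) (u k) \ ball 0 (ℓ k))), ENNReal.ofReal (‖z‖ ^ p) :=
        lintegral_mono_set hsub
    _ ≤ (∫⁻ z in ({0} : Set E), ENNReal.ofReal (‖z‖ ^ p)) +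
        ∫⁻ z in (⋃ k, (ball (0:E) (u k) \ ball 0 (ℓ k))), ENNReal.ofReal (‖z‖ ^ p) :=
        lintegral_union_le _ _ _
    _ ≤ 0 + ∑' k, ∫⁻ z in (ball (0:E) (u k) \ ball 0 (ℓ k)), ENNReal.ofReal (‖z‖ ^ p) := by
        gcongr
        · have : volume ({0} : Set E) = 0 := measure_singleton 0
          rw [setLIntegral_measure_zero _ _ this]
        · exact lintegral_iUnion_le _ _
    _ ≤ ∑' k, ENNReal.ofReal ((ℓ k) ^ p * (u k) ^ (N:ℝ)) *
          volume (ball (0:EuclideanSpace ℝ (Fin N)) 1) := by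
        rw [zero_add]
        refine ENNReal.tsum_le_tsum fun k => ?_
        have hmeas : MeasurableSet (ball (0:E) (u k) \ ball 0 (ℓ k)) :=
          measurableSet_ball.diff measurableSet_ball
        have step1 : ∫⁻ z in (ball (0:E) (u k) \ ball 0 (ℓ k)), ENNReal.ofReal (‖z‖ ^ p)
            ≤ ∫⁻ _ in (ball (0:E) (u k) \ ball 0 (ℓ k)), ENNReal.ofReal ((ℓ k) ^ p) := by
          refine setLIntegral_mono' hmeas fun z hz => ?_
          refine ENNReal.ofReal_le_ofReal ?_
          exact Real.rpow_le_rpow_of_nonpos (hl k) (by simpa [mem_ball_zero_iff] using hz.2) hp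
        refine step1.trans ?_
        rw [setLIntegral_const]
        have hball : volume (ball (0:E) (u k) \ ball 0 (ℓ k)) ≤
            ENNReal.ofReal ((u k) ^ (N:ℝ)) * volume (ball (0:E) 1) := by
          refine (measure_mono diff_subset).trans ?_
          rw [Measure.addHaar_ball _ _ (hu k)]
          rw [finrank_euclideanSpace_fin, ← Real.rpow_natCast (u k) N]
        calc ENNReal.ofReal ((ℓ k) ^ p) * volume (ball (0:E) (u k) \ ball 0 (ℓ k))
            ≤ ENNReal.ofReal ((ℓ k) ^ p) * (ENNReal.ofReal ((u k) ^ (N:ℝ)) * volume (ball (0:E) 1)) := by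
              gcongr
          _ = ENNReal.ofReal ((ℓ k) ^ p * (u k) ^ (N:ℝ)) * volume (ball (0:E) 1) := by
              rw [ENNReal.ofReal_mul (Real.rpow_nonneg (hl k).le _), mul_assoc]
    _ = _ := ENNReal.tsum_mul_right

lemma term_identity {r p : ℝ} (hr : 0 < r) (a b : ℝ) :
    (r * (2:ℝ) ^ a) ^ p * (r * (2:ℝ) ^ b) ^ (N:ℝ) =
      r ^ ((N:ℝ) + p) * ((2:ℝ) ^ (a*p + b*(N:ℝ))) := by
  have h2 : (0:ℝ) < 2 := two_pos
  rw [Real.mul_rpow hr.le (Real.rpow_nonneg h2.le _),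
      Real.mul_rpow hr.le (Real.rpow_nonneg h2.le _),
      ← Real.rpow_mul h2.le, ← Real.rpow_mul h2.le, mul_mul_mul_comm,
      ← Real.rpow_add hr, ← Real.rpow_add h2]
  ring_nf

lemma lint_ball (hN : 1 ≤ N) {p : ℝ} (hp₁ : -(N:ℝ) < p) (hp₂ : p ≤ 0) :
    ∃ c : ℝ≥0∞, c ≠ ⊤ ∧ ∀ r : ℝ, 0 < r →
      ∫⁻ z in ball (0:E) r, ENNReal.ofReal (‖z‖ ^ p) ≤ c * ENNReal.ofReal (r ^ ((N:ℝ) + p)) := by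
  classical
  refine ⟨ENNReal.ofReal ((2:ℝ)^(-p)) * (1 - ENNReal.ofReal ((2:ℝ)^(-((N:ℝ)+p))))⁻¹ *
      volume (ball (0:E) 1), ?_, ?_⟩
  · refine ENNReal.mul_ne_top (ENNReal.mul_ne_top ENNReal.ofReal_ne_top ?_)
      measure_ball_lt_top.ne
    rw [ENNReal.inv_ne_top, ← pos_iff_ne_zero, tsub_pos_iff_lt]
    exact ENNReal.ofReal_lt_one.2 (Real.rpow_lt_one_of_one_lt_of_neg one_lt_two (by linarith))
  · intro r hr
    set ℓ : ℕ → ℝ := fun k => r * (2:ℝ) ^ (-(k:ℝ)-1) with hℓdef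
    set u : ℕ → ℝ := fun k => r * (2:ℝ) ^ (-(k:ℝ)) with hudef
    have hl : ∀ k, 0 < ℓ k := fun k => mul_pos hr (Real.rpow_pos_of_pos two_pos _)
    have hu : ∀ k, 0 ≤ u k := fun k => (mul_pos hr (Real.rpow_pos_of_pos two_pos _)).le
    have hS : ∀ z : E, z ∈ ball (0:E) r → z ≠ 0 → ∃ k, ℓ k ≤ ‖z‖ ∧ ‖z‖ < u k := by
      intro z hz h0
      have hzpos : 0 < ‖z‖ := norm_pos_iff.2 h0
      have hzr : ‖z‖ < r := by simpa [mem_ball_zero_iff] using hz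
      have hex : ∃ k : ℕ, ℓ k ≤ ‖z‖ := by
        obtain ⟨n, hn⟩ := exists_pow_lt_of_lt_one (div_pos hzpos hr) (by norm_num : (1:ℝ)/2 < 1)
        refine ⟨n, ?_⟩
        have h1 : ((1:ℝ)/2) ^ (n+1) ≤ ((1:ℝ)/2) ^ n :=
          pow_le_pow_of_le_one (by norm_num) (by norm_num) (Nat.le_succ n)
        have h2 : (2:ℝ) ^ (-(n:ℝ)-1) = ((1:ℝ)/2) ^ (n+1) := by
          rw [show (-(n:ℝ)-1) = -((n+1 : ℕ):ℝ) by push_cast; ring, Real.rpow_neg two_pos.le,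
            Real.rpow_natCast, one_div, inv_pow]
        have : (2:ℝ) ^ (-(n:ℝ)-1) ≤ ‖z‖ / r := h2 ▸ (h1.trans hn.le)
        calc ℓ n = r * (2:ℝ) ^ (-(n:ℝ)-1) := rfl
          _ ≤ r * (‖z‖ / r) := by nlinarith
          _ = ‖z‖ := by field_simp
      set k₀ := Nat.find hex with hk₀
      refine ⟨k₀, Nat.find_spec hex, ?_⟩
      rcases Nat.eq_zero_or_pos k₀ with h | h
      · simpa [hudef, h] using hzr
      · have hm : ¬ ℓ (k₀ - 1) ≤ ‖z‖ := Nat.find_min hex (by omega)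
        have : u k₀ = ℓ (k₀ - 1) := by
          simp only [hudef, hℓdef]
          congr 1
          congr 1
          have : ((k₀ - 1 : ℕ) : ℝ) = (k₀ : ℝ) - 1 := by
            have := Nat.cast_sub (by omega : 1 ≤ k₀) (R := ℝ)
            simpa using this
          rw [this]; ring
        rw [this]
        exact lt_of_not_ge hm
    refine (lint_annuli hN hl hu hS hp₂).trans (le_of_eq ?_)
    have hterm : ∀ k : ℕ, ENNReal.ofReal ((ℓ k) ^ p * (u k) ^ (N:ℝ)) =
        ENNReal.ofReal (r ^ ((N:ℝ)+p)) * (ENNReal.ofReal ((2:ℝ)^(-p)) *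
          (ENNReal.ofReal ((2:ℝ)^(-((N:ℝ)+p))))^k) := by
      intro k
      have hid : (ℓ k) ^ p * (u k) ^ (N:ℝ) =
          r ^ ((N:ℝ)+p) * ((2:ℝ)^(-p) * ((2:ℝ)^(-((N:ℝ)+p)))^k) := by
        have := term_identity (N := N) (p := p) hr (-(k:ℝ)-1) (-(k:ℝ))
        rw [hℓdef, hudef]
        simp only []
        rw [this]
        congr 1
        rw [← Real.rpow_natCast ((2:ℝ)^(-((N:ℝ)+p))) k, ← Real.rpow_mul two_pos.le,
          ← Real.rpow_add two_pos]
        congr 1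
        ring
      rw [hid, ENNReal.ofReal_mul (Real.rpow_nonneg hr.le _),
        ENNReal.ofReal_mul (Real.rpow_nonneg two_pos.le _),
        ENNReal.ofReal_pow (Real.rpow_nonneg two_pos.le _)]
    calc (∑' k, ENNReal.ofReal ((ℓ k) ^ p * (u k) ^ (N:ℝ))) * volume (ball (0:E) 1)
        = (ENNReal.ofReal (r ^ ((N:ℝ)+p)) * (ENNReal.ofReal ((2:ℝ)^(-p)) *
            ∑' k, (ENNReal.ofReal ((2:ℝ)^(-((N:ℝ)+p))))^k)) * volume (ball (0:E) 1) := by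
          rw [tsum_congr hterm, ENNReal.tsum_mul_left, ENNReal.tsum_mul_left]
      _ = ENNReal.ofReal ((2:ℝ)^(-p)) * (1 - ENNReal.ofReal ((2:ℝ)^(-((N:ℝ)+p))))⁻¹ *
            volume (ball (0:E) 1) * ENNReal.ofReal (r ^ ((N:ℝ)+p)) := by
          rw [ENNReal.tsum_geometric]; ring

lemma lint_compl (hN : 1 ≤ N) {p : ℝ} (hp₁ : (N:ℝ) + p < 0) :
    ∃ c : ℝ≥0∞, c ≠ ⊤ ∧ ∀ r : ℝ, 0 < r →
      ∫⁻ z in (ball (0:E) r)ᶜ, ENNReal.ofReal (‖z‖ ^ p) ≤ c * ENNReal.ofReal (r ^ ((N:ℝ) + p)) := by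
  classical
  have hp₂ : p ≤ 0 := by
    have : (0:ℝ) ≤ (N:ℝ) := Nat.cast_nonneg N
    linarith
  refine ⟨ENNReal.ofReal ((2:ℝ)^((N:ℝ))) * (1 - ENNReal.ofReal ((2:ℝ)^((N:ℝ)+p)))⁻¹ *
      volume (ball (0:E) 1), ?_, ?_⟩
  · refine ENNReal.mul_ne_top (ENNReal.mul_ne_top ENNReal.ofReal_ne_top ?_)
      measure_ball_lt_top.ne
    rw [ENNReal.inv_ne_top, ← pos_iff_ne_zero, tsub_pos_iff_lt]
    exact ENNReal.ofReal_lt_one.2 (Real.rpow_lt_one_of_one_lt_of_neg one_lt_two hp₁)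
  · intro r hr
    set ℓ : ℕ → ℝ := fun k => r * (2:ℝ) ^ ((k:ℝ)) with hℓdef
    set u : ℕ → ℝ := fun k => r * (2:ℝ) ^ ((k:ℝ)+1) with hudef
    have hl : ∀ k, 0 < ℓ k := fun k => mul_pos hr (Real.rpow_pos_of_pos two_pos _)
    have hu : ∀ k, 0 ≤ u k := fun k => (mul_pos hr (Real.rpow_pos_of_pos two_pos _)).le
    have hS : ∀ z : E, z ∈ (ball (0:E) r)ᶜ → z ≠ 0 → ∃ k, ℓ k ≤ ‖z‖ ∧ ‖z‖ < u k := by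
      intro z hz _
      have hzr : r ≤ ‖z‖ := by
        have := hz
        simp only [mem_compl_iff, mem_ball_zero_iff, not_lt] at this
        exact this
      have hex : ∃ n : ℕ, ‖z‖ < r * 2 ^ n := by
        obtain ⟨n, hn⟩ := pow_unbounded_of_one_lt (‖z‖ / r) (one_lt_two (α := ℝ))
        exact ⟨n, by rw [mul_comm]; exact (div_lt_iff₀ hr).mp hn⟩
      set n₀ := Nat.find hex with hn₀
      have hspec : ‖z‖ < r * 2 ^ n₀ := Nat.find_spec hex
      have hpos : 1 ≤ n₀ := by
        rcases Nat.eq_zero_or_pos n₀ with h | h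
        · exfalso
          have := hspec
          rw [h] at this
          simp at this
          linarith
        · omega
      refine ⟨n₀ - 1, ?_, ?_⟩
      · have hmin : ¬ (‖z‖ < r * 2 ^ (n₀ - 1)) := Nat.find_min hex (by omega)
        have : ℓ (n₀ - 1) = r * 2 ^ (n₀ - 1) := by
          simp only [hℓdef, Real.rpow_natCast]
        rw [this]
        linarith [not_lt.mp hmin]
      · have : u (n₀ - 1) = r * 2 ^ n₀ := by
          simp only [hudef]
          congr 1
          rw [show ((n₀ - 1 : ℕ):ℝ) + 1 = ((n₀ : ℕ):ℝ) by
            have := Nat.cast_sub (by omega : 1 ≤ n₀) (R := ℝ); simp at this; linarith,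
            Real.rpow_natCast]
        rw [this]
        exact hspec
    refine (lint_annuli hN hl hu hS hp₂).trans (le_of_eq ?_)
    have hterm : ∀ k : ℕ, ENNReal.ofReal ((ℓ k) ^ p * (u k) ^ (N:ℝ)) =
        ENNReal.ofReal (r ^ ((N:ℝ)+p)) * (ENNReal.ofReal ((2:ℝ)^((N:ℝ))) *
          (ENNReal.ofReal ((2:ℝ)^(((N:ℝ)+p))))^k) := by
      intro k
      have hid : (ℓ k) ^ p * (u k) ^ (N:ℝ) =
          r ^ ((N:ℝ)+p) * ((2:ℝ)^((N:ℝ)) * ((2:ℝ)^(((N:ℝ)+p)))^k) := by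
        have := term_identity (N := N) (p := p) hr ((k:ℝ)) ((k:ℝ)+1)
        rw [hℓdef, hudef]
        simp only []
        rw [this]
        congr 1
        rw [← Real.rpow_natCast ((2:ℝ)^(((N:ℝ)+p))) k, ← Real.rpow_mul two_pos.le,
          ← Real.rpow_add two_pos]
        congr 1
        ring
      rw [hid, ENNReal.ofReal_mul (Real.rpow_nonneg hr.le _),
        ENNReal.ofReal_mul (Real.rpow_nonneg two_pos.le _),
        ENNReal.ofReal_pow (Real.rpow_nonneg two_pos.le _)]
    calc (∑' k, ENNReal.ofReal ((ℓ k) ^ p * (u k) ^ (N:ℝ))) * volume (ball (0:E) 1)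
        = (ENNReal.ofReal (r ^ ((N:ℝ)+p)) * (ENNReal.ofReal ((2:ℝ)^((N:ℝ))) *
            ∑' k, (ENNReal.ofReal ((2:ℝ)^(((N:ℝ)+p))))^k)) * volume (ball (0:E) 1) := by
          rw [tsum_congr hterm, ENNReal.tsum_mul_left, ENNReal.tsum_mul_left]
      _ = ENNReal.ofReal ((2:ℝ)^((N:ℝ))) * (1 - ENNReal.ofReal ((2:ℝ)^(((N:ℝ)+p))))⁻¹ *
            volume (ball (0:E) 1) * ENNReal.ofReal (r ^ ((N:ℝ)+p)) := by
          rw [ENNReal.tsum_geometric]; ring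

lemma fderiv_holder {φ : EuclideanSpace ℝ (Fin N) → ℝ} {M₁ β : ℝ}
    (hH : ∀ a b, ‖gradient φ a - gradient φ b‖ ≤ M₁ * ‖a - b‖ ^ β) :
    ∀ a b : E, ‖fderiv ℝ φ a - fderiv ℝ φ b‖ ≤ M₁ * ‖a - b‖ ^ β := by
  intro a b
  have h2 : gradient φ a - gradient φ b =
      (InnerProductSpace.toDual ℝ (EuclideanSpace ℝ (Fin N))).symm
        (fderiv ℝ φ a - fderiv ℝ φ b) := by
    rw [map_sub]; rfl
  have h3 := hH a b
  rw [h2, LinearIsometryEquiv.norm_map] at h3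
  exact h3

lemma second_diff_bound {φ : EuclideanSpace ℝ (Fin N) → ℝ} (hφ : Differentiable ℝ φ)
    {M₁ β : ℝ} (hβ : 0 < β) (hM : 0 ≤ M₁)
    (hH : ∀ a b : E, ‖fderiv ℝ φ a - fderiv ℝ φ b‖ ≤ M₁ * ‖a - b‖ ^ β) (x z : E) :
    |φ (x + z) + φ (x - z) - 2 * φ x| ≤ M₁ * 2 ^ β * ‖z‖ ^ (1 + β) := by
  set f : ℝ → ℝ := fun t => φ (x + t • z) + φ (x - t • z) with hf
  set f' : ℝ → ℝ := fun t => (fderiv ℝ φ (x + t • z) - fderiv ℝ φ (x - t • z)) z with hf'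
  have hder : ∀ t ∈ Icc (0:ℝ) 1, HasDerivWithinAt f (f' t) (Icc 0 1) t := by
    intro t _
    have h0 : HasDerivAt (fun t : ℝ => t • z) z t := by
      simpa using (hasDerivAt_id t).smul_const z
    have h1 : HasDerivAt (fun t : ℝ => x + t • z) z t := h0.const_add x
    have h2 : HasDerivAt (fun t : ℝ => x - t • z) (-z) t := h0.const_sub x
    have hφ1 := (hφ (x + t • z)).hasFDerivAt.comp_hasDerivAt t h1
    have hφ2 := (hφ (x - t • z)).hasFDerivAt.comp_hasDerivAt t h2
    have hsum := hφ1.add hφ2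
    have : f' t = fderiv ℝ φ (x + t • z) z + fderiv ℝ φ (x - t • z) (-z) := by
      simp [hf', ContinuousLinearMap.sub_apply, map_neg, sub_eq_add_neg]
    rw [this]
    exact hsum.hasDerivWithinAt
  have bound : ∀ t ∈ Ico (0:ℝ) 1, ‖f' t‖ ≤ M₁ * 2 ^ β * ‖z‖ ^ (1 + β) := by
    intro t ht
    have ht0 : 0 ≤ t := ht.1
    have ht1 : t ≤ 1 := ht.2.le
    have hdiff : (x + t • z) - (x - t • z) = (2 * t) • z := by
      rw [two_mul, add_smul]; abel
    have h1 : ‖f' t‖ ≤ ‖fderiv ℝ φ (x + t • z) - fderiv ℝ φ (x - t • z)‖ * ‖z‖ :=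
      ContinuousLinearMap.le_opNorm _ z
    have h2 : ‖fderiv ℝ φ (x + t • z) - fderiv ℝ φ (x - t • z)‖ ≤
        M₁ * (2 * t * ‖z‖) ^ β := by
      have := hH (x + t • z) (x - t • z)
      rw [hdiff, norm_smul, Real.norm_eq_abs, abs_of_nonneg (by linarith)] at this
      exact this
    have h3 : (2 * t * ‖z‖) ^ β ≤ (2 * ‖z‖) ^ β := by
      apply Real.rpow_le_rpow (by positivity) _ hβ.le
      nlinarith [norm_nonneg z]
    have h4 : (2 * ‖z‖) ^ β = 2 ^ β * ‖z‖ ^ β :=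
      Real.mul_rpow (by norm_num) (norm_nonneg z)
    have h5 : ‖z‖ ^ (1 + β) = ‖z‖ * ‖z‖ ^ β := by
      rw [Real.rpow_add' (norm_nonneg z) (by linarith), Real.rpow_one]
    calc ‖f' t‖ ≤ (M₁ * (2 * t * ‖z‖) ^ β) * ‖z‖ := by
          refine h1.trans ?_
          gcongr
      _ ≤ (M₁ * (2 ^ β * ‖z‖ ^ β)) * ‖z‖ := by
          rw [← h4]; gcongr
      _ = M₁ * 2 ^ β * ‖z‖ ^ (1 + β) := by rw [h5]; ring
  have key := norm_image_sub_le_of_norm_deriv_le_segment' hder bound 1 (by norm_num)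
  have hf1 : f 1 = φ (x + z) + φ (x - z) := by simp [hf]
  have hf0 : f 0 = 2 * φ x := by simp [hf]; ring
  rw [hf1, hf0] at key
  simpa [Real.norm_eq_abs] using key

lemma diff_second_diff_bound {φ : EuclideanSpace ℝ (Fin N) → ℝ} (hφ : Differentiable ℝ φ)
    {M₁ β : ℝ}
    (hH : ∀ a b : E, ‖fderiv ℝ φ a - fderiv ℝ φ b‖ ≤ M₁ * ‖a - b‖ ^ β) (x₁ x₂ z : E) :
    |(φ (x₁ + z) + φ (x₁ - z) - 2 * φ x₁) - (φ (x₂ + z) + φ (x₂ - z) - 2 * φ x₂)| ≤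
      2 * (M₁ * ‖x₁ - x₂‖ ^ β) * ‖z‖ := by
  set G : E → ℝ := fun w => φ (x₁ + w) - φ (x₂ + w) with hGdef
  have hG : ∀ w : E, HasFDerivAt G (fderiv ℝ φ (x₁ + w) - fderiv ℝ φ (x₂ + w)) w := by
    intro w
    have h1 : HasFDerivAt (fun w : E => φ (x₁ + w)) (fderiv ℝ φ (x₁ + w)) w := by
      have := (hφ (x₁ + w)).hasFDerivAt.comp w ((hasFDerivAt_id w).const_add x₁)
      simp only [ContinuousLinearMap.comp_id] at this; exact this
    have h2 : HasFDerivAt (fun w : E => φ (x₂ + w)) (fderiv ℝ φ (x₂ + w)) w := by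
      have := (hφ (x₂ + w)).hasFDerivAt.comp w ((hasFDerivAt_id w).const_add x₂)
      simp only [ContinuousLinearMap.comp_id] at this; exact this
    exact h1.sub h2
  have key : ∀ w₁ w₂ : E, ‖G w₂ - G w₁‖ ≤ (M₁ * ‖x₁ - x₂‖ ^ β) * ‖w₂ - w₁‖ := by
    intro w₁ w₂
    refine Convex.norm_image_sub_le_of_norm_hasFDerivWithin_le
      (fun w _ => (hG w).hasFDerivWithinAt) (fun w _ => ?_) convex_univ
      (mem_univ w₁) (mem_univ w₂)
    have := hH (x₁ + w) (x₂ + w)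
    simpa [add_sub_add_right_eq_sub] using this
  have hg : (φ (x₁ + z) + φ (x₁ - z) - 2 * φ x₁) - (φ (x₂ + z) + φ (x₂ - z) - 2 * φ x₂) =
      (G z - G 0) + (G (-z) - G 0) := by
    simp only [hGdef, add_zero, ← sub_eq_add_neg]
    ring
  rw [hg]
  calc |(G z - G 0) + (G (-z) - G 0)| ≤ |G z - G 0| + |G (-z) - G 0| := abs_add_le _ _
    _ ≤ (M₁ * ‖x₁ - x₂‖ ^ β) * ‖z - 0‖ + (M₁ * ‖x₁ - x₂‖ ^ β) * ‖-z - 0‖ := by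
        have k1 := key 0 z
        have k2 := key 0 (-z)
        rw [Real.norm_eq_abs] at k1 k2
        exact add_le_add k1 k2
    _ = 2 * (M₁ * ‖x₁ - x₂‖ ^ β) * ‖z‖ := by rw [sub_zero, sub_zero, norm_neg]; ring

lemma lint_le_of_bound (hN : 1 ≤ N) {S : Set (EuclideanSpace ℝ (Fin N))}
    {f : EuclideanSpace ℝ (Fin N) → ℝ} {A t : ℝ} (hA : 0 ≤ A)
    (hf : ∀ z : E, z ≠ 0 → |f z| ≤ A * ‖z‖ ^ t) :
    ∫⁻ z in S, ENNReal.ofReal ‖f z‖ ≤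
      ENNReal.ofReal A * ∫⁻ z in S, ENNReal.ofReal (‖z‖ ^ t) := by
  haveI := myNontrivial hN
  rw [← lintegral_const_mul' _ _ ENNReal.ofReal_ne_top]
  refine lintegral_mono_ae ?_
  have h0 : ∀ᵐ z : E ∂(volume.restrict S), z ≠ 0 := by
    refine ae_restrict_of_ae ?_
    have hsing : volume ({(0:E)} : Set (EuclideanSpace ℝ (Fin N))) = 0 := measure_singleton 0
    rw [ae_iff]
    simpa [not_not] using hsing
  filter_upwards [h0] with z hz
  rw [← ENNReal.ofReal_mul hA]
  exact ENNReal.ofReal_le_ofReal (by rw [Real.norm_eq_abs]; exact hf z hz)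

end AuxStmt13

/-- The nonlocal operator `Lφ(x) = ½ ∫ (φ(x+z) + φ(x-z) - 2φ(x)) K(z) dz`. -/
noncomputable def nonlocalOp {N : ℕ} (K : EuclideanSpace ℝ (Fin N) → ℝ)
    (φ : EuclideanSpace ℝ (Fin N) → ℝ) (x : EuclideanSpace ℝ (Fin N)) : ℝ :=
  (1 / 2) * ∫ z, (φ (x + z) + φ (x - z) - 2 * φ x) * K z

/-- Hölder continuity in `x` of `x ↦ Lφ(x)` for an even kernel bounded by
`Γ|z|^{-(N+σ)}` and `φ` bounded with `β`-Hölder gradient: with `α = 1 + β - σ` and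
`α' ∈ (0,α)`, `|Lφ(x₁) - Lφ(x₂)| ≤ C‖x₁ - x₂‖^{α'}(M₀ + M₁)`, `C = C(N,σ,β,α',Γ)`. -/
theorem stmt13 (N : ℕ) (hN : 1 ≤ N) (σ β Γ α' : ℝ) (hσ₁ : 1 < σ) (hσ₂ : σ < 2)
    (hβ₁ : σ - 1 < β) (hβ₂ : β < 1) (hΓ : 0 < Γ)
    (hα'₁ : 0 < α') (hα'₂ : α' < 1 + β - σ) :
    ∃ C : ℝ, ∀ K : EuclideanSpace ℝ (Fin N) → ℝ, Measurable K →
      (∀ z, z ≠ 0 → 0 ≤ K z) →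
      (∀ z, z ≠ 0 → K (-z) = K z) →
      (∀ z, z ≠ 0 → K z ≤ Γ * ‖z‖ ^ (-((N : ℝ) + σ))) →
      ∀ (M₀ M₁ : ℝ) (φ : EuclideanSpace ℝ (Fin N) → ℝ),
      (∀ x, |φ x| ≤ M₀) → Differentiable ℝ φ →
      (∀ a b, ‖gradient φ a - gradient φ b‖ ≤ M₁ * ‖a - b‖ ^ β) →
      ∀ x₁ x₂ : EuclideanSpace ℝ (Fin N),
        |nonlocalOp K φ x₁ - nonlocalOp K φ x₂| ≤ C * ‖x₁ - x₂‖ ^ α' * (M₀ + M₁) := by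
  have hN1 : (1:ℝ) ≤ (N:ℝ) := by exact_mod_cast hN
  have hβ0 : 0 < β := by linarith
  -- the three integral constants
  obtain ⟨cI, hcI, HcI⟩ := lint_ball (N := N) hN (p := 1 + β - ((N:ℝ) + σ))
    (by linarith) (by linarith)
  obtain ⟨cO, hcO, HcO⟩ := lint_compl (N := N) hN (p := 1 - ((N:ℝ) + σ)) (by linarith)
  obtain ⟨cO', hcO', HcO'⟩ := lint_compl (N := N) hN (p := -((N:ℝ) + σ)) (by linarith)
  set C₁ : ℝ := Γ * ((2:ℝ) ^ β * cI.toReal + cO.toReal) with hC₁def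
  set C₂ : ℝ := Γ * ((2:ℝ) ^ β * cI.toReal + 4 * cO'.toReal) with hC₂def
  have hC₁0 : 0 ≤ C₁ := by
    have := ENNReal.toReal_nonneg (a := cI); have := ENNReal.toReal_nonneg (a := cO)
    have h2β : (0:ℝ) < 2 ^ β := Real.rpow_pos_of_pos two_pos β
    rw [hC₁def]; positivity
  have hC₂0 : 0 ≤ C₂ := by
    have := ENNReal.toReal_nonneg (a := cI); have := ENNReal.toReal_nonneg (a := cO')
    have h2β : (0:ℝ) < 2 ^ β := Real.rpow_pos_of_pos two_pos β
    rw [hC₂def]; positivity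
  refine ⟨max C₁ C₂, ?_⟩
  intro K hKmeas hKpos hKeven hKbound M₀ M₁ φ hM₀ hφ hHg x₁ x₂
  have hC0 : 0 ≤ max C₁ C₂ := le_trans hC₁0 (le_max_left _ _)
  have hfd := fderiv_holder hHg
  have hM₀0 : 0 ≤ M₀ := (abs_nonneg _).trans (hM₀ 0)
  have hM₁0 : 0 ≤ M₁ := by
    haveI := myNontrivial hN
    obtain ⟨a, b, hab⟩ := exists_pair_ne (EuclideanSpace ℝ (Fin N))
    have h1 := hHg a b
    have h2 : (0:ℝ) < ‖a - b‖ ^ β :=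
      Real.rpow_pos_of_pos (norm_pos_iff.2 (sub_ne_zero.2 hab)) β
    nlinarith [norm_nonneg (gradient φ a - gradient φ b)]
  have h2β : (0:ℝ) < 2 ^ β := Real.rpow_pos_of_pos two_pos β
  -- pointwise bounds for the integrands
  have hA2 := second_diff_bound hφ hβ0 hM₁0 hfd
  have hin : ∀ x z : EuclideanSpace ℝ (Fin N), z ≠ 0 →
      |(φ (x + z) + φ (x - z) - 2 * φ x) * K z| ≤
        (M₁ * 2 ^ β * Γ) * ‖z‖ ^ (1 + β - ((N:ℝ) + σ)) := by
    intro x z hz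
    have hz' : 0 < ‖z‖ := norm_pos_iff.2 hz
    calc |(φ (x + z) + φ (x - z) - 2 * φ x) * K z|
        = |φ (x + z) + φ (x - z) - 2 * φ x| * K z := by
          rw [abs_mul, abs_of_nonneg (hKpos z hz)]
      _ ≤ (M₁ * 2 ^ β * ‖z‖ ^ (1 + β)) * (Γ * ‖z‖ ^ (-((N:ℝ) + σ))) := by
          apply mul_le_mul (hA2 x z) (hKbound z hz) (hKpos z hz) (by positivity)
      _ = (M₁ * 2 ^ β * Γ) * (‖z‖ ^ (1 + β) * ‖z‖ ^ (-((N:ℝ) + σ))) := by ring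
      _ = (M₁ * 2 ^ β * Γ) * ‖z‖ ^ (1 + β - ((N:ℝ) + σ)) := by
          rw [← Real.rpow_add hz', ← sub_eq_add_neg]
  have hout4 : ∀ x : EuclideanSpace ℝ (Fin N), ∀ z : EuclideanSpace ℝ (Fin N), z ≠ 0 →
      |(φ (x + z) + φ (x - z) - 2 * φ x) * K z| ≤ (4 * M₀ * Γ) * ‖z‖ ^ (-((N:ℝ) + σ)) := by
    intro x z hz
    have hg4 : |φ (x + z) + φ (x - z) - 2 * φ x| ≤ 4 * M₀ := by
      have h1 := abs_le.1 (hM₀ (x + z))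
      have h2 := abs_le.1 (hM₀ (x - z))
      have h3 := abs_le.1 (hM₀ x)
      rw [abs_le]; constructor <;> [linarith; linarith]
    calc |(φ (x + z) + φ (x - z) - 2 * φ x) * K z|
        = |φ (x + z) + φ (x - z) - 2 * φ x| * K z := by
          rw [abs_mul, abs_of_nonneg (hKpos z hz)]
      _ ≤ (4 * M₀) * (Γ * ‖z‖ ^ (-((N:ℝ) + σ))) := by
          apply mul_le_mul hg4 (hKbound z hz) (hKpos z hz) (by positivity)
      _ = (4 * M₀ * Γ) * ‖z‖ ^ (-((N:ℝ) + σ)) := by ring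
  -- integrability
  have hcont : ∀ x : EuclideanSpace ℝ (Fin N),
      Continuous fun z : EuclideanSpace ℝ (Fin N) => φ (x + z) + φ (x - z) - 2 * φ x := by
    intro x
    have hφc := hφ.continuous
    exact ((hφc.comp (continuous_const.add continuous_id)).add
      (hφc.comp (continuous_const.sub continuous_id))).sub continuous_const
  have hInt : ∀ x : EuclideanSpace ℝ (Fin N),
      Integrable (fun z => (φ (x + z) + φ (x - z) - 2 * φ x) * K z) volume := by
    intro x
    refine ⟨((hcont x).measurable.mul hKmeas).aestronglyMeasurable, ?_⟩
    rw [hasFiniteIntegral_iff_norm]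
    rw [← lintegral_add_compl
      (fun z => ENNReal.ofReal ‖(φ (x + z) + φ (x - z) - 2 * φ x) * K z‖)
      (measurableSet_ball (x := (0:EuclideanSpace ℝ (Fin N))) (ε := 1))]
    have I1 : ∫⁻ z in ball (0:EuclideanSpace ℝ (Fin N)) 1,
        ENNReal.ofReal ‖(φ (x + z) + φ (x - z) - 2 * φ x) * K z‖ ≤
        ENNReal.ofReal (M₁ * 2 ^ β * Γ) * (cI * ENNReal.ofReal ((1:ℝ) ^ ((N:ℝ) + (1 + β - ((N:ℝ) + σ))))) := by
      refine (lint_le_of_bound hN (by positivity) (hin x)).trans ?_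
      gcongr
      exact HcI 1 one_pos
    have I2 : ∫⁻ z in (ball (0:EuclideanSpace ℝ (Fin N)) 1)ᶜ,
        ENNReal.ofReal ‖(φ (x + z) + φ (x - z) - 2 * φ x) * K z‖ ≤
        ENNReal.ofReal (4 * M₀ * Γ) * (cO' * ENNReal.ofReal ((1:ℝ) ^ ((N:ℝ) + -((N:ℝ) + σ)))) := by
      refine (lint_le_of_bound hN (by positivity) (hout4 x)).trans ?_
      gcongr
      exact HcO' 1 one_pos
    have : ENNReal.ofReal (M₁ * 2 ^ β * Γ) * (cI * ENNReal.ofReal ((1:ℝ) ^ ((N:ℝ) + (1 + β - ((N:ℝ) + σ))))) +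
        ENNReal.ofReal (4 * M₀ * Γ) * (cO' * ENNReal.ofReal ((1:ℝ) ^ ((N:ℝ) + -((N:ℝ) + σ)))) < ⊤ := by
      rw [Real.one_rpow, Real.one_rpow]
      exact ENNReal.add_lt_top.2
        ⟨ENNReal.mul_lt_top ENNReal.ofReal_lt_top
          (ENNReal.mul_ne_top hcI ENNReal.ofReal_ne_top).lt_top,
         ENNReal.mul_lt_top ENNReal.ofReal_lt_top
          (ENNReal.mul_ne_top hcO' ENNReal.ofReal_ne_top).lt_top⟩
    exact lt_of_le_of_lt (add_le_add I1 I2) this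
  -- main case analysis
  rcases eq_or_lt_of_le (norm_nonneg (x₁ - x₂)) with hr0 | hr0
  · -- x₁ = x₂
    have hx : x₁ = x₂ := sub_eq_zero.1 (norm_eq_zero.1 hr0.symm)
    rw [hx, sub_self, abs_zero, sub_self, norm_zero, Real.zero_rpow hα'₁.ne']
    simp
  · set r := ‖x₁ - x₂‖ with hrdef
    have hrpos : 0 < r := hr0
    have hD : nonlocalOp K φ x₁ - nonlocalOp K φ x₂ =
        (1/2) * ((∫ z, (φ (x₁ + z) + φ (x₁ - z) - 2 * φ x₁) * K z) -
                 (∫ z, (φ (x₂ + z) + φ (x₂ - z) - 2 * φ x₂) * K z)) := by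
      rw [nonlocalOp, nonlocalOp]; ring
    rcases le_or_gt r 1 with hr1 | hr1
    · -- small distance
      have hsub : (∫ z, (φ (x₁ + z) + φ (x₁ - z) - 2 * φ x₁) * K z) -
                  (∫ z, (φ (x₂ + z) + φ (x₂ - z) - 2 * φ x₂) * K z) =
          ∫ z, ((φ (x₁ + z) + φ (x₁ - z) - 2 * φ x₁) * K z -
                (φ (x₂ + z) + φ (x₂ - z) - 2 * φ x₂) * K z) :=
        (integral_sub (hInt x₁) (hInt x₂)).symm
      have hfin : ∀ z : EuclideanSpace ℝ (Fin N), z ≠ 0 →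
          |(φ (x₁ + z) + φ (x₁ - z) - 2 * φ x₁) * K z -
            (φ (x₂ + z) + φ (x₂ - z) - 2 * φ x₂) * K z| ≤
          (2 * (M₁ * 2 ^ β * Γ)) * ‖z‖ ^ (1 + β - ((N:ℝ) + σ)) := by
        intro z hz
        have a1 := hin x₁ z hz
        have a2 := hin x₂ z hz
        have a3 := abs_sub ((φ (x₁ + z) + φ (x₁ - z) - 2 * φ x₁) * K z)
          ((φ (x₂ + z) + φ (x₂ - z) - 2 * φ x₂) * K z)
        linarith
      have hfout : ∀ z : EuclideanSpace ℝ (Fin N), z ≠ 0 →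
          |(φ (x₁ + z) + φ (x₁ - z) - 2 * φ x₁) * K z -
            (φ (x₂ + z) + φ (x₂ - z) - 2 * φ x₂) * K z| ≤
          (2 * (M₁ * r ^ β) * Γ) * ‖z‖ ^ (1 - ((N:ℝ) + σ)) := by
        intro z hz
        have hz' : 0 < ‖z‖ := norm_pos_iff.2 hz
        have hnn : (0:ℝ) ≤ 2 * (M₁ * r ^ β) * ‖z‖ :=
          mul_nonneg (mul_nonneg two_pos.le
            (mul_nonneg hM₁0 (Real.rpow_nonneg (norm_nonneg _) β))) (norm_nonneg z)
        calc |(φ (x₁ + z) + φ (x₁ - z) - 2 * φ x₁) * K z -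
              (φ (x₂ + z) + φ (x₂ - z) - 2 * φ x₂) * K z|
            = |(φ (x₁ + z) + φ (x₁ - z) - 2 * φ x₁) -
                (φ (x₂ + z) + φ (x₂ - z) - 2 * φ x₂)| * K z := by
              rw [show (φ (x₁ + z) + φ (x₁ - z) - 2 * φ x₁) * K z -
                (φ (x₂ + z) + φ (x₂ - z) - 2 * φ x₂) * K z =
                ((φ (x₁ + z) + φ (x₁ - z) - 2 * φ x₁) -
                (φ (x₂ + z) + φ (x₂ - z) - 2 * φ x₂)) * K z from by ring,
                abs_mul, abs_of_nonneg (hKpos z hz)]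
          _ ≤ (2 * (M₁ * r ^ β) * ‖z‖) * (Γ * ‖z‖ ^ (-((N:ℝ) + σ))) :=
              mul_le_mul (diff_second_diff_bound hφ hfd x₁ x₂ z) (hKbound z hz)
                (hKpos z hz) hnn
          _ = (2 * (M₁ * r ^ β) * Γ) * (‖z‖ ^ (1:ℝ) * ‖z‖ ^ (-((N:ℝ) + σ))) := by
              rw [Real.rpow_one]; ring
          _ = (2 * (M₁ * r ^ β) * Γ) * ‖z‖ ^ (1 - ((N:ℝ) + σ)) := by
              rw [← Real.rpow_add hz', ← sub_eq_add_neg]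
      have hArpnn : (0:ℝ) ≤ 2 * (M₁ * r ^ β) * Γ :=
        mul_nonneg (mul_nonneg two_pos.le
          (mul_nonneg hM₁0 (Real.rpow_nonneg (norm_nonneg _) β))) hΓ.le
      have hlin : ∫⁻ z, ENNReal.ofReal
          ‖(φ (x₁ + z) + φ (x₁ - z) - 2 * φ x₁) * K z -
            (φ (x₂ + z) + φ (x₂ - z) - 2 * φ x₂) * K z‖ ≤
          ENNReal.ofReal (2 * (M₁ * 2 ^ β * Γ)) *
            (cI * ENNReal.ofReal (r ^ ((N:ℝ) + (1 + β - ((N:ℝ) + σ))))) +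
          ENNReal.ofReal (2 * (M₁ * r ^ β) * Γ) *
            (cO * ENNReal.ofReal (r ^ ((N:ℝ) + (1 - ((N:ℝ) + σ))))) := by
        rw [← lintegral_add_compl
          (fun z => ENNReal.ofReal ‖(φ (x₁ + z) + φ (x₁ - z) - 2 * φ x₁) * K z -
            (φ (x₂ + z) + φ (x₂ - z) - 2 * φ x₂) * K z‖)
          (measurableSet_ball (x := (0:EuclideanSpace ℝ (Fin N))) (ε := r))]
        refine add_le_add ?_ ?_
        · refine (lint_le_of_bound hN (by positivity) hfin).trans ?_
          gcongr
          exact HcI r hrpos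
        · refine (lint_le_of_bound hN hArpnn hfout).trans ?_
          gcongr
          exact HcO r hrpos
      have hBinne : ENNReal.ofReal (2 * (M₁ * 2 ^ β * Γ)) *
          (cI * ENNReal.ofReal (r ^ ((N:ℝ) + (1 + β - ((N:ℝ) + σ))))) ≠ ⊤ :=
        ENNReal.mul_ne_top ENNReal.ofReal_ne_top
          (ENNReal.mul_ne_top hcI ENNReal.ofReal_ne_top)
      have hBoutne : ENNReal.ofReal (2 * (M₁ * r ^ β) * Γ) *
          (cO * ENNReal.ofReal (r ^ ((N:ℝ) + (1 - ((N:ℝ) + σ))))) ≠ ⊤ :=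
        ENNReal.mul_ne_top ENNReal.ofReal_ne_top
          (ENNReal.mul_ne_top hcO ENNReal.ofReal_ne_top)
      have habs : |∫ z, ((φ (x₁ + z) + φ (x₁ - z) - 2 * φ x₁) * K z -
            (φ (x₂ + z) + φ (x₂ - z) - 2 * φ x₂) * K z)| ≤
          (ENNReal.ofReal (2 * (M₁ * 2 ^ β * Γ)) *
            (cI * ENNReal.ofReal (r ^ ((N:ℝ) + (1 + β - ((N:ℝ) + σ))))) +
          ENNReal.ofReal (2 * (M₁ * r ^ β) * Γ) *
            (cO * ENNReal.ofReal (r ^ ((N:ℝ) + (1 - ((N:ℝ) + σ)))))).toReal := by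
        have h1 := norm_integral_le_lintegral_norm (μ := volume)
          (fun z => (φ (x₁ + z) + φ (x₁ - z) - 2 * φ x₁) * K z -
            (φ (x₂ + z) + φ (x₂ - z) - 2 * φ x₂) * K z)
        rw [Real.norm_eq_abs] at h1
        exact h1.trans (ENNReal.toReal_mono (ENNReal.add_ne_top.2 ⟨hBinne, hBoutne⟩) hlin)
      have htoReal : (ENNReal.ofReal (2 * (M₁ * 2 ^ β * Γ)) *
            (cI * ENNReal.ofReal (r ^ ((N:ℝ) + (1 + β - ((N:ℝ) + σ))))) +
          ENNReal.ofReal (2 * (M₁ * r ^ β) * Γ) *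
            (cO * ENNReal.ofReal (r ^ ((N:ℝ) + (1 - ((N:ℝ) + σ)))))).toReal =
          2 * (M₁ * 2 ^ β * Γ) * (cI.toReal * r ^ ((N:ℝ) + (1 + β - ((N:ℝ) + σ)))) +
          2 * (M₁ * r ^ β) * Γ * (cO.toReal * r ^ ((N:ℝ) + (1 - ((N:ℝ) + σ)))) := by
        rw [ENNReal.toReal_add hBinne hBoutne, ENNReal.toReal_mul, ENNReal.toReal_mul,
          ENNReal.toReal_mul, ENNReal.toReal_mul,
          ENNReal.toReal_ofReal (by positivity),
          ENNReal.toReal_ofReal (Real.rpow_nonneg hrpos.le _),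
          ENNReal.toReal_ofReal hArpnn,
          ENNReal.toReal_ofReal (Real.rpow_nonneg hrpos.le _)]
      have hEE : r ^ β * r ^ ((N:ℝ) + (1 - ((N:ℝ) + σ))) =
          r ^ ((N:ℝ) + (1 + β - ((N:ℝ) + σ))) := by
        rw [← Real.rpow_add hrpos,
          show β + ((N:ℝ) + (1 - ((N:ℝ) + σ))) = (N:ℝ) + (1 + β - ((N:ℝ) + σ)) from by ring]
      have hExp : r ^ ((N:ℝ) + (1 + β - ((N:ℝ) + σ))) ≤ r ^ α' :=
        Real.rpow_le_rpow_of_exponent_ge hrpos hr1 (by linarith)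
      have hmain : (1/2) * (2 * (M₁ * 2 ^ β * Γ) * (cI.toReal * r ^ ((N:ℝ) + (1 + β - ((N:ℝ) + σ)))) +
          2 * (M₁ * r ^ β) * Γ * (cO.toReal * r ^ ((N:ℝ) + (1 - ((N:ℝ) + σ))))) ≤
          C₁ * (M₁ * r ^ α') := by
        calc (1/2) * (2 * (M₁ * 2 ^ β * Γ) * (cI.toReal * r ^ ((N:ℝ) + (1 + β - ((N:ℝ) + σ)))) +
              2 * (M₁ * r ^ β) * Γ * (cO.toReal * r ^ ((N:ℝ) + (1 - ((N:ℝ) + σ)))))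
            = Γ * ((2:ℝ) ^ β * cI.toReal) * M₁ * r ^ ((N:ℝ) + (1 + β - ((N:ℝ) + σ))) +
              Γ * cO.toReal * M₁ * (r ^ β * r ^ ((N:ℝ) + (1 - ((N:ℝ) + σ)))) := by ring
          _ = Γ * ((2:ℝ) ^ β * cI.toReal) * M₁ * r ^ ((N:ℝ) + (1 + β - ((N:ℝ) + σ))) +
              Γ * cO.toReal * M₁ * r ^ ((N:ℝ) + (1 + β - ((N:ℝ) + σ))) := by rw [hEE]
          _ = C₁ * M₁ * r ^ ((N:ℝ) + (1 + β - ((N:ℝ) + σ))) := by rw [hC₁def]; ring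
          _ ≤ C₁ * M₁ * r ^ α' :=
              mul_le_mul_of_nonneg_left hExp (mul_nonneg hC₁0 hM₁0)
          _ = C₁ * (M₁ * r ^ α') := by ring
      have last : C₁ * (M₁ * r ^ α') ≤ max C₁ C₂ * r ^ α' * (M₀ + M₁) := by
        have hrα : (0:ℝ) ≤ r ^ α' := Real.rpow_nonneg (norm_nonneg _) α'
        have h1 : C₁ ≤ max C₁ C₂ := le_max_left _ _
        have t1 : (0:ℝ) ≤ (max C₁ C₂ - C₁) * (M₁ * r ^ α') :=
          mul_nonneg (sub_nonneg.2 h1) (mul_nonneg hM₁0 hrα)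
        have t2 : (0:ℝ) ≤ max C₁ C₂ * (M₀ * r ^ α') :=
          mul_nonneg hC0 (mul_nonneg hM₀0 hrα)
        have e : max C₁ C₂ * r ^ α' * (M₀ + M₁) =
            C₁ * (M₁ * r ^ α') + ((max C₁ C₂ - C₁) * (M₁ * r ^ α') +
              max C₁ C₂ * (M₀ * r ^ α')) := by ring
        rw [e]
        linarith
      calc |nonlocalOp K φ x₁ - nonlocalOp K φ x₂|
          = (1/2) * |∫ z, ((φ (x₁ + z) + φ (x₁ - z) - 2 * φ x₁) * K z -
              (φ (x₂ + z) + φ (x₂ - z) - 2 * φ x₂) * K z)| := by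
            rw [hD, hsub, abs_mul, abs_of_pos (by norm_num : (0:ℝ) < 1/2)]
        _ ≤ (1/2) * (2 * (M₁ * 2 ^ β * Γ) * (cI.toReal * r ^ ((N:ℝ) + (1 + β - ((N:ℝ) + σ)))) +
              2 * (M₁ * r ^ β) * Γ * (cO.toReal * r ^ ((N:ℝ) + (1 - ((N:ℝ) + σ))))) := by
            rw [← htoReal]
            exact mul_le_mul_of_nonneg_left habs (by norm_num)
        _ ≤ C₁ * (M₁ * r ^ α') := hmain
        _ ≤ max C₁ C₂ * r ^ α' * (M₀ + M₁) := last
    · -- large distance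
      have hpt : ∀ x : EuclideanSpace ℝ (Fin N), |nonlocalOp K φ x| ≤
          (1/2) * (M₁ * 2 ^ β * Γ * cI.toReal + 4 * M₀ * Γ * cO'.toReal) := by
        intro x
        have hlin : ∫⁻ z, ENNReal.ofReal ‖(φ (x + z) + φ (x - z) - 2 * φ x) * K z‖ ≤
            ENNReal.ofReal (M₁ * 2 ^ β * Γ) * cI + ENNReal.ofReal (4 * M₀ * Γ) * cO' := by
          rw [← lintegral_add_compl
            (fun z => ENNReal.ofReal ‖(φ (x + z) + φ (x - z) - 2 * φ x) * K z‖)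
            (measurableSet_ball (x := (0:EuclideanSpace ℝ (Fin N))) (ε := 1))]
          refine add_le_add ?_ ?_
          · refine (lint_le_of_bound hN (by positivity) (hin x)).trans ?_
            have h1 := HcI 1 one_pos
            rw [Real.one_rpow, ENNReal.ofReal_one, mul_one] at h1
            gcongr
          · refine (lint_le_of_bound hN (by positivity) (hout4 x)).trans ?_
            have h1 := HcO' 1 one_pos
            rw [Real.one_rpow, ENNReal.ofReal_one, mul_one] at h1
            gcongr
        have hne1 : ENNReal.ofReal (M₁ * 2 ^ β * Γ) * cI ≠ ⊤ :=
          ENNReal.mul_ne_top ENNReal.ofReal_ne_top hcI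
        have hne2 : ENNReal.ofReal (4 * M₀ * Γ) * cO' ≠ ⊤ :=
          ENNReal.mul_ne_top ENNReal.ofReal_ne_top hcO'
        have habs : |∫ z, (φ (x + z) + φ (x - z) - 2 * φ x) * K z| ≤
            (ENNReal.ofReal (M₁ * 2 ^ β * Γ) * cI + ENNReal.ofReal (4 * M₀ * Γ) * cO').toReal := by
          have h1 := norm_integral_le_lintegral_norm (μ := volume)
            (fun z => (φ (x + z) + φ (x - z) - 2 * φ x) * K z)
          rw [Real.norm_eq_abs] at h1
          exact h1.trans (ENNReal.toReal_mono (ENNReal.add_ne_top.2 ⟨hne1, hne2⟩) hlin)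
        have htr : (ENNReal.ofReal (M₁ * 2 ^ β * Γ) * cI +
            ENNReal.ofReal (4 * M₀ * Γ) * cO').toReal =
            M₁ * 2 ^ β * Γ * cI.toReal + 4 * M₀ * Γ * cO'.toReal := by
          rw [ENNReal.toReal_add hne1 hne2, ENNReal.toReal_mul, ENNReal.toReal_mul,
            ENNReal.toReal_ofReal (by positivity), ENNReal.toReal_ofReal (by positivity)]
        rw [htr] at habs
        rw [nonlocalOp, abs_mul, abs_of_pos (by norm_num : (0:ℝ) < 1/2)]
        exact mul_le_mul_of_nonneg_left habs (by norm_num)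
      have hd2 : |nonlocalOp K φ x₁ - nonlocalOp K φ x₂| ≤
          M₁ * 2 ^ β * Γ * cI.toReal + 4 * M₀ * Γ * cO'.toReal := by
        have := abs_sub (nonlocalOp K φ x₁) (nonlocalOp K φ x₂)
        have p1 := hpt x₁
        have p2 := hpt x₂
        linarith
      have hrα1 : (1:ℝ) ≤ r ^ α' := Real.one_le_rpow hr1.le hα'₁.le
      have hcI0 := ENNReal.toReal_nonneg (a := cI)
      have hcO'0 := ENNReal.toReal_nonneg (a := cO')
      have hfinal : M₁ * 2 ^ β * Γ * cI.toReal + 4 * M₀ * Γ * cO'.toReal ≤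
          max C₁ C₂ * r ^ α' * (M₀ + M₁) := by
        have h2 : C₂ ≤ max C₁ C₂ := le_max_right _ _
        have hrα : (0:ℝ) ≤ r ^ α' := Real.rpow_nonneg (norm_nonneg _) α'
        have step1 : M₁ * 2 ^ β * Γ * cI.toReal + 4 * M₀ * Γ * cO'.toReal ≤ C₂ * (M₀ + M₁) := by
          have u1 : (0:ℝ) ≤ Γ * ((2:ℝ) ^ β * cI.toReal) * M₀ :=
            mul_nonneg (mul_nonneg hΓ.le (mul_nonneg h2β.le hcI0)) hM₀0
          have u2 : (0:ℝ) ≤ Γ * (4 * cO'.toReal) * M₁ :=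
            mul_nonneg (mul_nonneg hΓ.le (by positivity)) hM₁0
          have e1 : C₂ * (M₀ + M₁) =
              M₁ * 2 ^ β * Γ * cI.toReal + 4 * M₀ * Γ * cO'.toReal +
                (Γ * ((2:ℝ) ^ β * cI.toReal) * M₀ + Γ * (4 * cO'.toReal) * M₁) := by
            rw [hC₂def]; ring
          rw [e1]
          linarith
        have step2 : C₂ * (M₀ + M₁) ≤ max C₁ C₂ * r ^ α' * (M₀ + M₁) := by
          have t3 : (0:ℝ) ≤ (max C₁ C₂ - C₂) * r ^ α' * (M₀ + M₁) :=
            mul_nonneg (mul_nonneg (sub_nonneg.2 h2) hrα) (add_nonneg hM₀0 hM₁0)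
          have t4 : (0:ℝ) ≤ C₂ * (r ^ α' - 1) * (M₀ + M₁) :=
            mul_nonneg (mul_nonneg hC₂0 (sub_nonneg.2 hrα1)) (add_nonneg hM₀0 hM₁0)
          have e2 : max C₁ C₂ * r ^ α' * (M₀ + M₁) =
              C₂ * (M₀ + M₁) + ((max C₁ C₂ - C₂) * r ^ α' * (M₀ + M₁) +
                C₂ * (r ^ α' - 1) * (M₀ + M₁)) := by ring
          rw [e2]
          linarith
        linarith
      linarith [hd2, hfinal]
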